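/- arXiv:1706.08935 — 2 statements merged into one kernel-verified Lean document; each statement's English description precedes it below -/
import Mathlib

section
/- Let R be a commutative ring and P₁, P₂ finitely generated projective R-modules. For any R-linear map a : P₂ → P₁, the automorphism [[1,a],[0,1]] ⊕ id of (P₁ ⊕ P₂) ⊕ (P₁ ⊕ P₂) is a commutator in Aut((P₁ ⊕ P₂) ⊕ (P₁ ⊕ P₂)). -/
open LinearMap

section Aux

variable {R : Type*} [CommRing R]
variable {P₁ P₂ : Type*} [AddCommGroup P₁] [AddCommGroup P₂] [Module R P₁] [Module R P₂]

/-- `e₁₄(a)` : `((x₁,x₂),(x₃,x₄)) ↦ ((x₁ + a x₄, x₂),(x₃,x₄))`. -/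
def auxF (a : P₂ →ₗ[R] P₁) : ((P₁ × P₂) × (P₁ × P₂)) →ₗ[R] ((P₁ × P₂) × (P₁ × P₂)) where
  toFun p := ((p.1.1 + a p.2.2, p.1.2), p.2)
  map_add' p q := by
    simp only [Prod.fst_add, Prod.snd_add, map_add, Prod.mk_add_mk]
    congr 1
    congr 1
    abel
  map_smul' r p := by
    simp [Prod.smul_mk, smul_add]

/-- `e₄₂(c)` : `((x₁,x₂),(x₃,x₄)) ↦ ((x₁,x₂),(x₃,x₄ + c x₂))`. -/
def auxG (c : P₂ →ₗ[R] P₂) : ((P₁ × P₂) × (P₁ × P₂)) →ₗ[R] ((P₁ × P₂) × (P₁ × P₂)) where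
  toFun p := (p.1, (p.2.1, p.2.2 + c p.1.2))
  map_add' p q := by
    simp only [Prod.fst_add, Prod.snd_add, map_add, Prod.mk_add_mk]
    congr 2
    abel
  map_smul' r p := by
    simp [Prod.smul_mk, smul_add]

lemma auxF_comp (a : P₂ →ₗ[R] P₁) :
    (auxF a) ∘ₗ (auxF (-a)) = LinearMap.id (R := R) := by
  apply LinearMap.ext
  rintro ⟨⟨x₁, x₂⟩, ⟨x₃, x₄⟩⟩
  simp [auxF]

lemma auxG_comp (c : P₂ →ₗ[R] P₂) :
    (auxG (P₁ := P₁) c) ∘ₗ (auxG (-c)) = LinearMap.id (R := R) := by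
  apply LinearMap.ext
  rintro ⟨⟨x₁, x₂⟩, ⟨x₃, x₄⟩⟩
  simp [auxG]

end Aux

/-- Over a commutative ring `R`, for finitely generated projective modules
`P₁, P₂` and any `R`-linear map `a : P₂ →ₗ[R] P₁`, the automorphism
`[[1,a],[0,1]] ⊕ id` of `(P₁ × P₂) × (P₁ × P₂)` is a commutator in the automorphism
group of `(P₁ × P₂) × (P₁ × P₂)`. -/
theorem unitriangular_oplus_id_is_commutator
    {R : Type*} [CommRing R]
    (P₁ P₂ : Type*) [AddCommGroup P₁] [AddCommGroup P₂] [Module R P₁] [Module R P₂]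
    [Module.Finite R P₁] [Module.Finite R P₂]
    [Module.Projective R P₁] [Module.Projective R P₂]
    (a : P₂ →ₗ[R] P₁) :
    -- u = [[1,a],[0,1]] : P₁ × P₂ → P₁ × P₂, (x,y) ↦ (x + a y, y)
    let u : (P₁ × P₂) →ₗ[R] (P₁ × P₂) :=
      LinearMap.prod (LinearMap.fst R P₁ P₂ + a ∘ₗ LinearMap.snd R P₁ P₂)
        (LinearMap.snd R P₁ P₂)
    -- u ⊕ id is a commutator f g f⁻¹ g⁻¹ of automorphisms
    ∃ f g : ((P₁ × P₂) × (P₁ × P₂)) ≃ₗ[R] ((P₁ × P₂) × (P₁ × P₂)),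
      (f.toLinearMap ∘ₗ g.toLinearMap ∘ₗ f.symm.toLinearMap ∘ₗ g.symm.toLinearMap)
        = LinearMap.prodMap u (LinearMap.id) := by
  intro u
  refine ⟨LinearEquiv.ofLinear (auxF a) (auxF (-a)) (auxF_comp a)
      (by simpa using auxF_comp (-a)),
    LinearEquiv.ofLinear (auxG (LinearMap.id)) (auxG (-LinearMap.id)) (auxG_comp _)
      (by simpa using auxG_comp (P₁ := P₁) (-(LinearMap.id : P₂ →ₗ[R] P₂))), ?_⟩
  apply LinearMap.ext
  rintro ⟨⟨x₁, x₂⟩, ⟨x₃, x₄⟩⟩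
  simp [auxF, auxG, u, map_sub]
  abel
end

section
/- Let F : A → B be an exact functor of exact categories and K₀(F) as above. Suppose (P', α', Q') ↪ (P, γα, Q) ↠ (N, 1, N) is an exact sequence in Rel(F), where γ is a commutator in Aut(F(Q)) and N ∈ A. Then [(P', α', Q')] = [(P, α, Q)] in K₀(F). -/
open CategoryTheory CategoryTheory.Limits ZeroObject

universe v u v' u'

variable {A : Type u} [Category.{v} A] {B : Type u'} [Category.{v'} B]

/-- The relative category `Rel(F)` of a functor `F : A ⥤ B`: objects are triples
`(P, α, Q)` with `P, Q ∈ A` and `α : F(P) ≅ F(Q)`. -/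
structure RelObj (F : A ⥤ B) where
  P : A
  Q : A
  α : F.obj P ≅ F.obj Q

variable (F : A ⥤ B)

/-- The defining relations for `K₀(F)`, relative to a class `E` of (admissible) exact
sequences of `A`: (a) additivity on sequences in `Rel(F)` which are componentwise exact,
(b) composition: `[(P,α,Q)] + [(Q,β,R)] = [(P,βα,R)]`. -/
def relK0Set (E : ∀ ⦃X Y Z : A⦄, (X ⟶ Y) → (Y ⟶ Z) → Prop) :
    Set (FreeAbelianGroup (RelObj F)) :=
  {z | (∃ (X' X X'' : RelObj F) (f : X'.P ⟶ X.P) (f' : X.P ⟶ X''.P)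
          (g : X'.Q ⟶ X.Q) (g' : X.Q ⟶ X''.Q),
          E f f' ∧ E g g' ∧
          F.map f ≫ X.α.hom = X'.α.hom ≫ F.map g ∧
          F.map f' ≫ X''.α.hom = X.α.hom ≫ F.map g' ∧
          z = FreeAbelianGroup.of X - FreeAbelianGroup.of X' - FreeAbelianGroup.of X'')
    ∨ (∃ (P Q R' : A) (α : F.obj P ≅ F.obj Q) (β : F.obj Q ≅ F.obj R'),
          z = FreeAbelianGroup.of (⟨P, R', α ≪≫ β⟩ : RelObj F)
              - FreeAbelianGroup.of (⟨P, Q, α⟩ : RelObj F)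
              - FreeAbelianGroup.of (⟨Q, R', β⟩ : RelObj F))}

/-- The relative `K₀` of a functor `F : A ⥤ B` with respect to a class `E` of exact
sequences of `A`. -/
def K0rel (E : ∀ ⦃X Y Z : A⦄, (X ⟶ Y) → (Y ⟶ Z) → Prop) : Type _ :=
  FreeAbelianGroup (RelObj F) ⧸ AddSubgroup.closure (relK0Set F E)

instance (E : ∀ ⦃X Y Z : A⦄, (X ⟶ Y) → (Y ⟶ Z) → Prop) :
    AddCommGroup (K0rel F E) :=
  QuotientAddGroup.Quotient.addCommGroup _

/-- The class `[X] ∈ K₀(F)` of an object `X` of `Rel(F)`. -/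
def K0cls (E : ∀ ⦃X Y Z : A⦄, (X ⟶ Y) → (Y ⟶ Z) → Prop) (X : RelObj F) :
    K0rel F E :=
  QuotientAddGroup.mk' _ (FreeAbelianGroup.of X)

section Relations

variable (E : ∀ ⦃X Y Z : A⦄, (X ⟶ Y) → (Y ⟶ Z) → Prop)

lemma K0cls_eq_add_of_mem_relK0Set {X X' X'' : RelObj F}
    (h : FreeAbelianGroup.of X - FreeAbelianGroup.of X' - FreeAbelianGroup.of X''
      ∈ relK0Set F E) :
    K0cls F E X = K0cls F E X' + K0cls F E X'' := by
  rw [← sub_eq_zero, ← sub_sub]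
  exact (QuotientAddGroup.eq_zero_iff _).mpr (AddSubgroup.subset_closure h)

lemma K0cls_of_exact {X' X X'' : RelObj F} (f : X'.P ⟶ X.P) (f' : X.P ⟶ X''.P)
    (g : X'.Q ⟶ X.Q) (g' : X.Q ⟶ X''.Q) (hf : E f f') (hg : E g g')
    (hsq₁ : F.map f ≫ X.α.hom = X'.α.hom ≫ F.map g)
    (hsq₂ : F.map f' ≫ X''.α.hom = X.α.hom ≫ F.map g') :
    K0cls F E X = K0cls F E X' + K0cls F E X'' :=
  K0cls_eq_add_of_mem_relK0Set F E
    (Or.inl ⟨X', X, X'', f, f', g, g', hf, hg, hsq₁, hsq₂, rfl⟩)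

lemma K0cls_trans {P Q R : A} (α : F.obj P ≅ F.obj Q) (β : F.obj Q ≅ F.obj R) :
    K0cls F E ⟨P, R, α ≪≫ β⟩ = K0cls F E ⟨P, Q, α⟩ + K0cls F E ⟨Q, R, β⟩ :=
  K0cls_eq_add_of_mem_relK0Set F E (Or.inr ⟨P, Q, R, α, β, rfl⟩)

lemma K0cls_refl (N : A) : K0cls F E ⟨N, N, Iso.refl (F.obj N)⟩ = 0 := by
  have h := K0cls_trans F E (Iso.refl (F.obj N)) (Iso.refl (F.obj N))
  rwa [Iso.refl_trans, left_eq_add] at h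

lemma K0cls_symm {Q : A} (σ : F.obj Q ≅ F.obj Q) :
    K0cls F E ⟨Q, Q, σ.symm⟩ = -K0cls F E ⟨Q, Q, σ⟩ := by
  have h := K0cls_trans F E σ σ.symm
  rw [Iso.self_symm_id, K0cls_refl] at h
  exact eq_neg_of_add_eq_zero_right h.symm

lemma K0cls_commutator {Q : A} (σ τ : F.obj Q ≅ F.obj Q) :
    K0cls F E ⟨Q, Q, σ ≪≫ τ ≪≫ σ.symm ≪≫ τ.symm⟩ = 0 := by
  rw [K0cls_trans, K0cls_trans, K0cls_trans, K0cls_symm, K0cls_symm]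
  abel

end Relations

theorem K0rel_looparrow
    (E : ∀ ⦃X Y Z : A⦄, (X ⟶ Y) → (Y ⟶ Z) → Prop)
    (P' Q' P Q N : A)
    (α' : F.obj P' ≅ F.obj Q') (α : F.obj P ≅ F.obj Q)
    -- a commutator γ in Aut (F(Q))
    (σ τ : F.obj Q ≅ F.obj Q)
    -- the exact sequence (P',α',Q') ↣ (P, γα, Q) ↠ (N,1,N)
    (f : P' ⟶ P) (f' : P ⟶ N) (g : Q' ⟶ Q) (g' : Q ⟶ N)
    (hEf : E f f') (hEg : E g g')
    (hsq₁ : F.map f ≫ (α ≪≫ (σ ≪≫ τ ≪≫ σ.symm ≪≫ τ.symm)).hom = α'.hom ≫ F.map g)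
    (hsq₂ : F.map f' ≫ (Iso.refl (F.obj N)).hom
        = (α ≪≫ (σ ≪≫ τ ≪≫ σ.symm ≪≫ τ.symm)).hom ≫ F.map g') :
    K0cls F E ⟨P', Q', α'⟩ = K0cls F E ⟨P, Q, α⟩ := by
  have hexact := K0cls_of_exact F E (X' := ⟨P', Q', α'⟩)
    (X := ⟨P, Q, α ≪≫ (σ ≪≫ τ ≪≫ σ.symm ≪≫ τ.symm)⟩) (X'' := ⟨N, N, Iso.refl (F.obj N)⟩)
    f f' g g' hEf hEg hsq₁ hsq₂
  rw [K0cls_trans, K0cls_commutator, K0cls_refl] at hexact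
  simpa using hexact.symm
end
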